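/- arXiv:1703.01009 — 4 statements merged into one kernel-verified Lean document; each statement's English description precedes it below -/
import Mathlib

section
/- If suf(i) and suf(j) both start with the same first character t, suf(i) is an L-suffix, and suf(j) is an S-suffix, then suf(i) < suf(j) lexicographically. -/
variable {α : Type*}

/-- The suffix of `T` starting at (1-based) position `i`. -/
def Suf (T : List α) (i : ℕ) : List α := T.drop (i - 1)

/-- The (1-based) `i`-th character of `T`, i.e. the first character of `Suf T i`. -/
def Chr [Inhabited α] (T : List α) (i : ℕ) : α := (Suf T i).headI

/-- `Suf T i` is lexicographically smaller than `Suf T j`. -/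
def SufLt [LT α] (T : List α) (i j : ℕ) : Prop := List.Lex (· < ·) (Suf T i) (Suf T j)

/-- `Suf T i` is an S-suffix (position in range, and `i = N` or `suf i < suf (i+1)`). -/
def IsS [LinearOrder α] (T : List α) (i : ℕ) : Prop :=
  1 ≤ i ∧ i ≤ T.length ∧ (i = T.length ∨ SufLt T i (i + 1))

/-- `Suf T i` is an L-suffix (position in range and not an S-suffix). -/
def IsL [LinearOrder α] (T : List α) (i : ℕ) : Prop :=
  1 ≤ i ∧ i ≤ T.length ∧ ¬ (i = T.length ∨ SufLt T i (i + 1))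

/-- `Suf T i` is an LMS-suffix: an S-suffix whose preceding suffix is an L-suffix. -/
def IsLMS [LinearOrder α] (T : List α) (i : ℕ) : Prop :=
  1 < i ∧ IsS T i ∧ IsL T (i - 1)

/-- The last character of `T` is strictly smaller than every other character of `T`. -/
def LastSmallest [Inhabited α] [LinearOrder α] (T : List α) : Prop :=
  ∀ i, 1 ≤ i → i < T.length → Chr T T.length < Chr T i

/- A suffix `u` with `u < t :: u` has the form `t^k w`, where `w` is empty or starts below `t`;
a suffix `v` with `t :: v < v` has the form `t^m w'`, where `w'` starts above `t`. Comparing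
`t^k w` with `t^m w'` gives `u < v` whatever `k` and `m` are, so `t :: u < t :: v`. -/

theorem List.lex_of_lex_cons_self_of_cons_lex_self {r : α → α → Prop} [IsTrans α r] {t : α}
    {u v : List α} (hu : List.Lex r u (t :: u)) (hv : List.Lex r (t :: v) v) :
    List.Lex r u v := by
  induction u generalizing v with
  | nil =>
    cases v with
    | nil => cases hv
    | cons => exact List.Lex.nil
  | cons a u ih =>
    obtain _ | ⟨b, v'⟩ := v
    · cases hv
    rcases List.cons_lex_cons_iff.mp hu with hat | ⟨rfl, hu'⟩
    · rcases List.cons_lex_cons_iff.mp hv with htb | ⟨rfl, -⟩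
      · exact List.Lex.rel (_root_.trans hat htb)
      · exact List.Lex.rel hat
    · rcases List.cons_lex_cons_iff.mp hv with htb | ⟨rfl, hv'⟩
      · exact List.Lex.rel htb
      · exact List.Lex.cons (ih hu' hv')

lemma suf_eq_cons [Inhabited α] (T : List α) {i : ℕ} (hi₁ : 1 ≤ i) (hiN : i ≤ T.length) :
    Suf T i = Chr T i :: Suf T (i + 1) := by
  obtain ⟨k, rfl⟩ := Nat.exists_eq_add_of_le' hi₁
  simp only [Chr, Suf, Nat.add_sub_cancel]
  rw [List.drop_eq_getElem_cons (by omega)]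
  rfl

lemma IsL.sufLt_succ [Inhabited α] [LinearOrder α] {T : List α} {i : ℕ} (hL : IsL T i) :
    SufLt T (i + 1) i := by
  obtain ⟨hi₁, hiN, hnotS⟩ := hL
  have hne : Suf T (i + 1) ≠ Suf T i := by
    rw [suf_eq_cons T hi₁ hiN]
    exact (List.cons_ne_self _ _).symm
  by_contra hnlt
  exact hne (Std.Trichotomous.trichotomous _ _ hnlt fun h => hnotS (Or.inr h))

/-- If `suf i` and `suf j` start with the same character `t`, `suf i` is an L-suffix and
`suf j` is an S-suffix, then `suf i < suf j` lexicographically. -/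
theorem stmt3 [Inhabited α] [LinearOrder α] (T : List α) (hlast : LastSmallest T)
    (i j : ℕ) (t : α) (hL : IsL T i) (hS : IsS T j)
    (hti : Chr T i = t) (htj : Chr T j = t) :
    SufLt T i j := by
  have hsucc_i : SufLt T (i + 1) i := hL.sufLt_succ
  obtain ⟨hi₁, hiN, hnotS⟩ := hL
  obtain ⟨hj₁, hjN, hjS⟩ := hS
  have hiN' : i < T.length := lt_of_le_of_ne hiN fun h => hnotS (Or.inl h)
  have hsucc_j : SufLt T j (j + 1) := hjS.resolve_left fun hj => by
    have := hlast i hi₁ hiN'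
    rw [← hj, htj, hti] at this
    exact lt_irrefl t this
  have hsi : Suf T i = t :: Suf T (i + 1) := hti ▸ suf_eq_cons T hi₁ hiN
  have hsj : Suf T j = t :: Suf T (j + 1) := htj ▸ suf_eq_cons T hj₁ hjN
  unfold SufLt at hsucc_i hsucc_j ⊢
  rw [hsi] at hsucc_i ⊢
  rw [hsj] at hsucc_j ⊢
  exact List.Lex.cons (List.lex_of_lex_cons_self_of_cons_lex_self hsucc_i hsucc_j)
end

section
/- The map i ↦ floor(i/2) is injective on the set of positions i (1 ≤ i ≤ N) such that suf(i) is stored in Y[t], i.e., on any set of positions where T[i] = t and (i = 1 or T[i-1] ≠ T[i]); consequently, from j = floor(i/2) and t, the original position i can be recovered: if T[2j] ≠ T[2j+1] then i is whichever of 2j, 2j+1 has T[i] = t, otherwise i = 2j. -/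
variable {α : Type*}

/-- The map `i ↦ ⌊i/2⌋` is injective on positions `i` with `T[i] = t` and
(`i = 1` or `T[i-1] ≠ T[i]`); moreover, from `j = ⌊i/2⌋` and `t` the position `i`
can be recovered: if `T[2j] ≠ T[2j+1]` then `i` is whichever of `2j`, `2j+1` has
`T[i] = t`, otherwise `i = 2j`. -/
theorem stmt10 [Inhabited α] [LinearOrder α] (T : List α) (i : ℕ) (t : α)
    (hi : 1 ≤ i) (hiN : i ≤ T.length) (ht : Chr T i = t)
    (hprop : i = 1 ∨ Chr T (i - 1) ≠ Chr T i) :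
    (∀ i', 1 ≤ i' → i' ≤ T.length → Chr T i' = t →
        (i' = 1 ∨ Chr T (i' - 1) ≠ Chr T i') → i' / 2 = i / 2 → i' = i) ∧
    (2 ≤ i →
      (Chr T (2 * (i / 2)) ≠ Chr T (2 * (i / 2) + 1) →
        (i = 2 * (i / 2) ↔ Chr T (2 * (i / 2)) = t)) ∧
      (Chr T (2 * (i / 2)) = Chr T (2 * (i / 2) + 1) → i = 2 * (i / 2))) := by
  constructor
  · intro i' h1 h2 ht' hprop' hdiv
    rcases (by omega : i' = i ∨ i' = i + 1 ∨ i = i' + 1) with h | h | h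
    · exact h
    · exfalso
      rcases hprop' with h1' | hne
      · omega
      · exact hne (by rw [show i' - 1 = i from by omega, ht, ht'])
    · exfalso
      rcases hprop with h1' | hne
      · omega
      · exact hne (by rw [show i - 1 = i' from by omega, ht, ht'])
  · intro h2
    constructor
    · intro hne
      constructor
      · intro heq; rw [← heq]; exact ht
      · intro hchr
        by_contra hne2
        rcases hprop with h | hp
        · omega
        · exact hp (by rw [show i - 1 = 2 * (i / 2) from by omega, hchr, ht])
    · intro heqc
      by_contra hne2
      rcases hprop with h | hp
      · omega
      · exact hp (by rw [show i - 1 = 2 * (i / 2) from by omega, heqc,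
          show 2 * (i / 2) + 1 = i from by omega])
end

section
/- In the suffix array SA of T, for each character t, all L-suffixes with first character t appear before all S-suffixes with first character t. -/
variable {α : Type*}

section Aux
variable {α : Type*}

lemma suf_cons' [Inhabited α] (T : List α) {i : ℕ} (h1 : 1 ≤ i) (h2 : i ≤ T.length) :
    Suf T i = Chr T i :: Suf T (i+1) := by
  have hlt : i - 1 < T.length := by omega
  have h : Suf T i = T[i-1] :: T.drop i := by
    simpa [Suf, show i - 1 + 1 = i by omega] using List.drop_eq_getElem_cons hlt
  have hc : Chr T i = T[i-1] := by simp [Chr, h]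
  have hs : Suf T (i+1) = T.drop i := by simp [Suf, show i + 1 - 1 = i by omega]
  rw [h, hc, hs]

lemma suf_len (T : List α) (i : ℕ) : (Suf T i).length = T.length - (i - 1) := by
  simp [Suf]

lemma lex_cons_cons [LinearOrder α] {a b : α} {l m : List α}
    (h : List.Lex (· < ·) (a::l) (b::m)) :
    a < b ∨ (a = b ∧ List.Lex (· < ·) l m) := by
  cases h with
  | rel hr => exact Or.inl hr
  | cons hc => exact Or.inr ⟨rfl, hc⟩

lemma not_lex_cases [LinearOrder α] {l m : List α}
    (h : ¬ List.Lex (· < ·) l m) : List.Lex (· < ·) m l ∨ m = l := by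
  haveI : IsTrichotomous α (· < ·) := inferInstance
  rcases trichotomous_of (List.Lex (· < ·)) m l with h' | h' | h'
  · exact Or.inl h'
  · exact Or.inr h'
  · exact absurd h' h

lemma L_step [Inhabited α] [LinearOrder α] {T : List α} (hlast : LastSmallest T)
    {i : ℕ} (hL : IsL T i) :
    Chr T (i+1) < Chr T i ∨ (Chr T (i+1) = Chr T i ∧ IsL T (i+1)) := by
  obtain ⟨h1, h2, h3⟩ := hL
  push_neg at h3
  obtain ⟨hne, hnlt⟩ := h3
  have hi : i < T.length := lt_of_le_of_ne h2 hne
  have e1 := suf_cons' T h1 h2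
  have e2 := suf_cons' T (by omega : 1 ≤ i+1) (by omega : i+1 ≤ T.length)
  rcases not_lex_cases hnlt with h | h
  · rw [e1, e2] at h
    rcases lex_cons_cons h with h' | ⟨he, hlex⟩
    · exact Or.inl h'
    · right
      have hne2 : i + 1 ≠ T.length := by
        intro hco
        have := hlast i h1 hi
        rw [← hco, he] at this
        exact lt_irrefl _ this
      refine ⟨he, by omega, by omega, ?_⟩
      push_neg
      refine ⟨hne2, fun hcon => ?_⟩
      unfold SufLt at hcon
      rw [← e2] at hlex
      haveI : IsAsymm α (· < ·) := inferInstance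
      exact asymm hcon hlex
  · exfalso
    have := congrArg List.length h
    rw [suf_len, suf_len] at this
    omega

lemma S_step [Inhabited α] [LinearOrder α] {T : List α} {i : ℕ}
    (hS : IsS T i) (hne : i ≠ T.length) :
    Chr T i < Chr T (i+1) ∨ (Chr T (i+1) = Chr T i ∧ IsS T (i+1)) := by
  obtain ⟨h1, h2, h3⟩ := hS
  have hi : i < T.length := lt_of_le_of_ne h2 hne
  rcases h3 with h3 | h3
  · exact absurd h3 hne
  have e2 := suf_cons' T (by omega : 1 ≤ i+1) (by omega : i+1 ≤ T.length)
  unfold SufLt at h3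
  rw [suf_cons' T h1 h2, e2] at h3
  rcases lex_cons_cons h3 with h' | ⟨he, hlex⟩
  · exact Or.inl h'
  · rw [← e2] at hlex
    exact Or.inr ⟨he.symm, by omega, by omega, Or.inr hlex⟩

lemma L_lt_S [Inhabited α] [LinearOrder α] {T : List α} (hlast : LastSmallest T) :
    ∀ k i j, T.length - i ≤ k → IsL T i → IsS T j → Chr T i = Chr T j →
    SufLt T i j := by
  intro k
  induction k with
  | zero =>
    intro i j hk hL _ _
    exfalso
    obtain ⟨h1, h2, h3⟩ := hL
    exact h3 (Or.inl (by omega))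
  | succ k ih =>
    intro i j hk hL hS heq
    have hi1 : 1 ≤ i := hL.1
    have hiN : i < T.length := by
      rcases lt_or_eq_of_le hL.2.1 with h | h
      · exact h
      · exact absurd (Or.inl h) hL.2.2
    have hjne : j ≠ T.length := by
      intro hco
      have := hlast i hi1 hiN
      rw [hco] at heq
      rw [heq] at this
      exact lt_irrefl _ this
    have hj1 : 1 ≤ j := hS.1
    have hjN : j < T.length := lt_of_le_of_ne hS.2.1 hjne
    have e1 := suf_cons' T hi1 (le_of_lt hiN)
    have e2 := suf_cons' T hj1 (le_of_lt hjN)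
    unfold SufLt
    rw [e1, e2, heq]
    apply List.Lex.cons
    -- need Lex (Suf T (i+1)) (Suf T (j+1))
    have ei1 : Suf T (i+1) = Chr T (i+1) :: Suf T (i+2) :=
      suf_cons' T (by omega) (by omega)
    have ej1 : Suf T (j+1) = Chr T (j+1) :: Suf T (j+2) :=
      suf_cons' T (by omega) (by omega)
    rcases L_step hlast hL with hLc | ⟨heL, hL'⟩ <;>
      rcases S_step hS hjne with hSc | ⟨heS, hS'⟩
    · rw [ei1, ej1]; exact List.Lex.rel (by rw [heq] at hLc; exact lt_trans hLc hSc)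
    · rw [ei1, ej1]; exact List.Lex.rel (by rw [heq, ← heS] at hLc; exact hLc)
    · rw [ei1, ej1]; exact List.Lex.rel (by rw [heL, heq]; exact hSc)
    · have : SufLt T (i+1) (j+1) :=
        ih (i+1) (j+1) (by omega) hL' hS' (by rw [heL, heS, heq])
      exact this

end Aux

/-- `sa` is the suffix array of `T`: a permutation of `[1, ..., N]` listing suffix
start positions in increasing lexicographic order of the corresponding suffixes. -/
def IsSA [LinearOrder α] (T : List α) (sa : List ℕ) : Prop :=
  sa.Perm (List.range' 1 T.length) ∧ sa.Pairwise (SufLt T)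

/-- In the suffix array of `T`, for each character `t`, all L-suffixes with first
character `t` appear before all S-suffixes with first character `t`. -/
theorem stmt12 [Inhabited α] [LinearOrder α] (T : List α) (hlast : LastSmallest T)
    (sa : List ℕ) (hsa : IsSA T sa) (t : α) (p q : ℕ)
    (hp : p < sa.length) (hq : q < sa.length)
    (hL : IsL T (sa.getD p 0)) (hS : IsS T (sa.getD q 0))
    (htp : Chr T (sa.getD p 0) = t) (htq : Chr T (sa.getD q 0) = t) :
    p < q := by
  obtain ⟨hperm, hpw⟩ := hsa
  have key : SufLt T (sa.getD p 0) (sa.getD q 0) :=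
    L_lt_S hlast T.length _ _ (by omega) hL hS (htp.trans htq.symm)
  by_contra hpq
  push_neg at hpq
  rcases eq_or_lt_of_le hpq with h | h
  · subst h
    exact hL.2.2 hS.2.2
  · have hback := List.pairwise_iff_getElem.mp hpw q p hq hp h
    rw [← List.getD_eq_getElem sa 0 hq, ← List.getD_eq_getElem sa 0 hp] at hback
    unfold SufLt at key hback
    haveI : IsAsymm α (· < ·) := inferInstance
    exact asymm key hback
end

section
/- Kasai's inequality: for 1 < i ≤ N, if rank(i) > 1, then LCP[rank(i)] ≥ LCP[rank(i-1)] - 1, where LCP[p] is the length of the longest common prefix of suf(SA[p]) and suf(SA[p-1]). -/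
variable {α : Type*}

/-- The length of the longest common prefix of two lists. -/
def lcp [DecidableEq α] : List α → List α → ℕ
  | a :: as, b :: bs => if a = b then lcp as bs + 1 else 0
  | _, _ => 0

/-- The LCP array entry at (0-based) position `p` of the suffix array:
`LCP[0] = 0` and `LCP[p] = lcp (suf sa[p]) (suf sa[p-1])` for `p ≥ 1`. -/
def LCPat [Inhabited α] [LinearOrder α] (T : List α) (sa : List ℕ) (p : ℕ) : ℕ :=
  if p = 0 then 0 else lcp (Suf T (sa.getD p 0)) (Suf T (sa.getD (p - 1) 0))

/-! If `suf (i-1)` and its predecessor `suf j` in the suffix array share their first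
character, dropping it gives `suf (j+1) < suf i` with a common prefix shorter by one. Among the
suffixes below `suf i`, the lcp with `suf i` never decreases along the suffix array, so the
immediate predecessor of `suf i` shares at least as long a prefix with it as `suf (j+1)` does. -/

section Lcp

variable [DecidableEq α]

@[simp] theorem lcp_nil_left (l : List α) : lcp [] l = 0 := by cases l <;> rfl

@[simp] theorem lcp_nil_right (l : List α) : lcp l [] = 0 := by cases l <;> rfl

@[simp] theorem lcp_cons_cons_self (a : α) (l l' : List α) :
    lcp (a :: l) (a :: l') = lcp l l' + 1 := by simp [lcp]

theorem lcp_cons_cons_of_ne {a b : α} (h : a ≠ b) (l l' : List α) :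
    lcp (a :: l) (b :: l') = 0 := by simp [lcp, h]

theorem lcp_comm : ∀ l l' : List α, lcp l l' = lcp l' l
  | [], l' => by simp
  | _ :: _, [] => by simp
  | a :: l, b :: l' => by
    by_cases h : a = b
    · subst h; simp [lcp_comm l l']
    · simp [lcp_cons_cons_of_ne h, lcp_cons_cons_of_ne (Ne.symm h)]

theorem lcp_le_lcp_tail_add_one : ∀ l l' : List α, lcp l l' ≤ lcp l.tail l'.tail + 1
  | [], _ => by simp
  | _ :: _, [] => by simp
  | a :: l, b :: l' => by
    by_cases h : a = b
    · subst h; simp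
    · simp [lcp_cons_cons_of_ne h]

end Lcp

section LcpLex

variable [LinearOrder α]

theorem tail_lt_tail_of_lt_of_lcp_ne_zero :
    ∀ {l l' : List α}, l < l' → lcp l l' ≠ 0 → l.tail < l'.tail
  | [], _, _, h0 => by simp at h0
  | _ :: _, [], _, h0 => by simp at h0
  | a :: l, b :: l', hlt, h0 => by
    by_cases h : a = b
    · subst h; exact List.lex_cons_iff.mp hlt
    · exact absurd (lcp_cons_cons_of_ne h l l') h0

theorem lcp_le_lcp_of_lt_of_lt : ∀ {l₁ l₂ l₃ : List α}, l₁ < l₂ → l₂ < l₃ → lcp l₁ l₃ ≤ lcp l₂ l₃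
  | [], _, _, _, _ => by simp
  | _ :: _, _, [], _, _ => by simp
  | _ :: _, [], _ :: _, h₁₂, _ => absurd h₁₂ List.not_lex_nil
  | a :: l₁, b :: l₂, c :: l₃, h₁₂, h₂₃ => by
    by_cases hac : a = c
    · subst hac
      obtain rfl : b = a :=
        le_antisymm (List.head_le_of_lt h₂₃) (List.head_le_of_lt h₁₂)
      simpa using lcp_le_lcp_of_lt_of_lt (List.lex_cons_iff.mp h₁₂) (List.lex_cons_iff.mp h₂₃)
    · simp [lcp_cons_cons_of_ne hac]

theorem lcp_le_lcp_of_le_of_lt {l₁ l₂ l₃ : List α} (h₁₂ : l₁ ≤ l₂)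
    (h₂₃ : l₂ < l₃) : lcp l₁ l₃ ≤ lcp l₂ l₃ := by
  rcases h₁₂.lt_or_eq with h | rfl
  · exact lcp_le_lcp_of_lt_of_lt h h₂₃
  · rfl

theorem List.SortedLT.lcp_le_lcp_pred {l : List (List α)} (hl : l.SortedLT)
    {q s : ℕ} (hqs : q < s) (hs : s < l.length) : lcp l[q] l[s] ≤ lcp l[s - 1] l[s] :=
  lcp_le_lcp_of_le_of_lt (hl.getElem_le_getElem_iff.2 (by omega))
    (hl.getElem_lt_getElem_iff.2 (by omega))

end LcpLex

theorem Suf_eq_nil {T : List α} {m : ℕ} (h : T.length < m) : Suf T m = [] :=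
  List.drop_eq_nil_of_le (by omega)

theorem tail_Suf (T : List α) {m : ℕ} (h : 1 ≤ m) : (Suf T m).tail = Suf T (m + 1) := by
  rw [Suf, Suf, List.tail_drop, Nat.sub_add_cancel h, Nat.add_sub_cancel]

theorem LCPat_of_pos [Inhabited α] [LinearOrder α] (T : List α) {sa : List ℕ} {p : ℕ}
    (hp : 0 < p) (hpl : p < sa.length) :
    LCPat T sa p = lcp (Suf T sa[p]) (Suf T sa[p - 1]) := by
  simp [LCPat, hp.ne', List.getD_eq_getElem?_getD, hpl, show p - 1 < sa.length by omega]

namespace IsSA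

variable [LinearOrder α] {T : List α} {sa : List ℕ}

theorem mem_iff (hsa : IsSA T sa) {m : ℕ} : m ∈ sa ↔ 1 ≤ m ∧ m ≤ T.length := by
  rw [hsa.1.mem_iff, List.mem_range'_1]
  omega

theorem sortedLT_map (hsa : IsSA T sa) : (sa.map (Suf T)).SortedLT := by
  rw [List.sortedLT_iff_pairwise, List.pairwise_map]
  exact hsa.2

theorem lcp_le_LCPat_idxOf [Inhabited α] (hsa : IsSA T sa) {i m : ℕ} (hi : i ∈ sa)
    (hm : 1 ≤ m) (hlt : Suf T m < Suf T i) :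
    lcp (Suf T m) (Suf T i) ≤ LCPat T sa (sa.idxOf i) := by
  by_cases hmN : T.length < m
  · simp [Suf_eq_nil hmN]
  have hm' : m ∈ sa := hsa.mem_iff.2 ⟨hm, by omega⟩
  have hs : sa.idxOf i < sa.length := List.idxOf_lt_length_iff.2 hi
  have hq : sa.idxOf m < sa.length := List.idxOf_lt_length_iff.2 hm'
  have hqs : sa.idxOf m < sa.idxOf i := by
    rw [← hsa.sortedLT_map.getElem_lt_getElem_iff (hi := by simpa) (hj := by simpa)]
    simpa [List.getElem_idxOf] using hlt
  have key := hsa.sortedLT_map.lcp_le_lcp_pred hqs (by simpa)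
  simp only [List.getElem_map, List.getElem_idxOf] at key
  rwa [LCPat_of_pos T (by omega) hs, List.getElem_idxOf, lcp_comm (Suf T i)]

theorem exists_LCPat_idxOf_eq [Inhabited α] (hsa : IsSA T sa) {i : ℕ} (hi : i ∈ sa)
    (hpos : 0 < sa.idxOf i) :
    ∃ j, 1 ≤ j ∧ Suf T j < Suf T i ∧ LCPat T sa (sa.idxOf i) = lcp (Suf T j) (Suf T i) := by
  have hs : sa.idxOf i < sa.length := List.idxOf_lt_length_iff.2 hi
  refine ⟨sa[sa.idxOf i - 1], (hsa.mem_iff.1 (List.getElem_mem _)).1, ?_, ?_⟩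
  · have hlt := List.pairwise_iff_getElem.1 hsa.2 (sa.idxOf i - 1) (sa.idxOf i) (by omega) hs
      (by omega)
    rwa [List.getElem_idxOf] at hlt
  · rw [LCPat_of_pos T hpos hs, lcp_comm]
    simp [List.getElem_idxOf]

end IsSA

theorem stmt17_general [Inhabited α] [LinearOrder α] (T : List α)
    (sa : List ℕ) (hsa : IsSA T sa)
    (i : ℕ) (h1 : 1 < i) (hiN : i ≤ T.length) :
    LCPat T sa (sa.idxOf (i - 1)) ≤ LCPat T sa (sa.idxOf i) + 1 := by
  have hi : i ∈ sa := hsa.mem_iff.2 ⟨by omega, hiN⟩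
  rcases Nat.eq_zero_or_pos (sa.idxOf (i - 1)) with hr | hr
  · simp [LCPat, hr]
  obtain ⟨j, hj, hlt, hLCP⟩ := hsa.exists_LCPat_idxOf_eq (hsa.mem_iff.2 ⟨by omega, by omega⟩) hr
  rw [hLCP]
  by_cases h0 : lcp (Suf T j) (Suf T (i - 1)) = 0
  · simp [h0]
  have htail := tail_lt_tail_of_lt_of_lcp_ne_zero hlt h0
  have hsucc := lcp_le_lcp_tail_add_one (Suf T j) (Suf T (i - 1))
  rw [tail_Suf T hj, tail_Suf T (by omega), Nat.sub_add_cancel (by omega)] at htail hsucc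
  exact hsucc.trans (Nat.add_le_add_right (hsa.lcp_le_LCPat_idxOf hi (by omega) htail) 1)

/-- Kasai's inequality: for `1 < i ≤ N`, if `rank i > 1` then
`LCP[rank i] ≥ LCP[rank (i-1)] - 1`. -/
theorem stmt17 [Inhabited α] [LinearOrder α] (T : List α) (hlast : LastSmallest T)
    (sa : List ℕ) (hsa : IsSA T sa)
    (i : ℕ) (h1 : 1 < i) (hiN : i ≤ T.length) (hrank : 1 ≤ sa.idxOf i) :
    LCPat T sa (sa.idxOf (i - 1)) ≤ LCPat T sa (sa.idxOf i) + 1 :=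
  stmt17_general T sa hsa i h1 hiN
end
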